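/- arXiv:2511.03028 — 2 statements merged into one kernel-verified Lean document; each statement's English description precedes it below -/
import Mathlib

section
/- Let m ≥ 2, let M be an m×r integer matrix whose last row is a zero row, and let M' be the (m−1)×r matrix obtained from M by deleting that zero row. Suppose no standard basis vector of ℤ^(m−1) lies in the subgroup generated by the columns of M'. Then χ(M^SACG) = χ(M'^SACG). -/
/-- The subgroup of `ℤ^m` generated by the columns of `M`. -/
def colSpan (m r : ℕ) (M : Matrix (Fin m) (Fin r) ℤ) : AddSubgroup (Fin m → ℤ) :=
  AddSubgroup.closure (Set.range fun j : Fin r => fun i : Fin m => M i j)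

/-- The standardized Abelian Cayley graph associated to `M`. -/
def SACG (m r : ℕ) (M : Matrix (Fin m) (Fin r) ℤ) :
    SimpleGraph ((Fin m → ℤ) ⧸ colSpan m r M) where
  Adj x y := x ≠ y ∧ ∃ i : Fin m,
    x - y = QuotientAddGroup.mk (Pi.single i (1 : ℤ)) ∨
    y - x = QuotientAddGroup.mk (Pi.single i (1 : ℤ))
  symm := by
    constructor
    rintro x y ⟨hne, i, h⟩
    exact ⟨hne.symm, i, h.symm⟩
  loopless := by constructor; rintro x ⟨h, -⟩; exact h rfl


/-!
Deleting the zero row splits off a free `ℤ`-coordinate: dropping the last coordinate and reading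
it off maps `M^SACG` homomorphically into the Cartesian product of `M'^SACG` with the path on `ℤ`,
while extending by `0` maps `M'^SACG` back into `M^SACG`. An `n`-colouring `c` of `M'^SACG` yields
the `n`-colouring `(x, k) ↦ c x + k (mod n)` of the product once `n ≥ 2`, and `n ≥ 2` holds because
`M'^SACG`, having no loops, has an edge.
-/

namespace SimpleGraph

variable {α β : Type*} {G : SimpleGraph α} {H : SimpleGraph β}

theorem Colorable.boxProd {n : ℕ} (hG : G.Colorable n) (hH : H.Colorable n) :
    (G □ H).Colorable n := by
  obtain ⟨cG⟩ := hG
  obtain ⟨cH⟩ := hH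
  refine ⟨Coloring.mk (fun x => cG x.1 + cH x.2) ?_⟩
  rintro x y (⟨hadj, h₂⟩ | ⟨hadj, h₁⟩) hxy
  · rw [h₂] at hxy
    exact cG.valid hadj (add_right_cancel hxy)
  · rw [h₁] at hxy
    exact cH.valid hadj (add_left_cancel hxy)

theorem chromaticNumber_boxProd_le_of_adj {u v : α} (huv : G.Adj u v) (hH : H.Colorable 2) :
    (G □ H).chromaticNumber ≤ G.chromaticNumber :=
  chromaticNumber_le_of_forall_imp fun _ hG => hG.boxProd <| hH.mono <| by
    exact_mod_cast (two_le_chromaticNumber_of_adj huv).trans hG.chromaticNumber_le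

theorem hasse_int_colorable_two : (hasse ℤ).Colorable 2 := by
  refine ⟨Coloring.mk (fun a : ℤ => (a : ZMod 2)) ?_⟩
  rintro a b (h | h) <;> obtain rfl := Order.covBy_iff_add_one_eq.1 h <;> push_cast
  exacts [left_ne_add.2 one_ne_zero, add_ne_left.2 one_ne_zero]

end SimpleGraph

open SimpleGraph

theorem colSpan_le_iff {m r : ℕ} {M : Matrix (Fin m) (Fin r) ℤ} {K : AddSubgroup (Fin m → ℤ)} :
    colSpan m r M ≤ K ↔ ∀ j, (fun i => M i j) ∈ K := by
  rw [colSpan, AddSubgroup.closure_le, Set.range_subset_iff]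
  rfl

theorem col_mem_colSpan {m r : ℕ} (M : Matrix (Fin m) (Fin r) ℤ) (j : Fin r) :
    (fun i => M i j) ∈ colSpan m r M :=
  AddSubgroup.subset_closure ⟨j, rfl⟩

theorem SACG.adj_of_sub_eq_single {m r : ℕ} {M : Matrix (Fin m) (Fin r) ℤ}
    {x y : (Fin m → ℤ) ⧸ colSpan m r M} {i : Fin m} (hi : Pi.single i 1 ∉ colSpan m r M)
    (h : x - y = QuotientAddGroup.mk (Pi.single i 1)) : (SACG m r M).Adj x y :=
  ⟨fun hxy => hi <| (QuotientAddGroup.eq_zero_iff _).1 <| by rw [← h, hxy, sub_self],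
    i, Or.inl h⟩

def snocZeroHom (m : ℕ) : (Fin m → ℤ) →+ (Fin (m + 1) → ℤ) :=
  AddMonoidHom.mk' (fun v => Fin.snoc v 0) fun u v => by
    ext k
    induction k using Fin.lastCases <;> simp

theorem snocZeroHom_single {m : ℕ} (i : Fin m) :
    snocZeroHom m (Pi.single i 1) = Pi.single i.castSucc 1 := by
  ext k
  induction k using Fin.lastCases <;>
    simp [snocZeroHom, Pi.single_apply, (Fin.castSucc_lt_last i).ne']

section ZeroRow

variable {m r : ℕ} {M : Matrix (Fin (m + 1)) (Fin r) ℤ} {M' : Matrix (Fin m) (Fin r) ℤ}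
  (hzero : ∀ j : Fin r, M (Fin.last m) j = 0)
  (hM' : ∀ (i : Fin m) (j : Fin r), M' i j = M i.castSucc j)

def truncQuot : (Fin (m + 1) → ℤ) ⧸ colSpan (m + 1) r M →+ (Fin m → ℤ) ⧸ colSpan m r M' :=
  QuotientAddGroup.map _ _ (LinearMap.funLeft ℤ ℤ Fin.castSucc).toAddMonoidHom <|
    colSpan_le_iff.2 fun j => by
      rw [AddSubgroup.mem_comap]
      convert col_mem_colSpan M' j using 1
      ext i
      simp [LinearMap.funLeft_apply, hM']

def lastQuot : (Fin (m + 1) → ℤ) ⧸ colSpan (m + 1) r M →+ ℤ :=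
  QuotientAddGroup.lift _ (Pi.evalAddMonoidHom (fun _ => ℤ) (Fin.last m)) <|
    colSpan_le_iff.2 fun j => hzero j

def snocQuot : (Fin m → ℤ) ⧸ colSpan m r M' →+ (Fin (m + 1) → ℤ) ⧸ colSpan (m + 1) r M :=
  QuotientAddGroup.map _ _ (snocZeroHom m) <| colSpan_le_iff.2 fun j => by
    rw [AddSubgroup.mem_comap]
    convert col_mem_colSpan M j using 1
    ext k
    induction k using Fin.lastCases <;> simp [snocZeroHom, hzero, hM']

theorem truncQuot_mk_single_castSucc (i : Fin m) :
    truncQuot hM' (QuotientAddGroup.mk (s := colSpan (m + 1) r M) (Pi.single i.castSucc 1)) =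
      QuotientAddGroup.mk (Pi.single i 1) := by
  rw [truncQuot, QuotientAddGroup.map_mk]
  congr 1
  ext k
  simp [LinearMap.funLeft_apply, Pi.single_apply]

theorem truncQuot_mk_single_last :
    truncQuot hM' (QuotientAddGroup.mk (s := colSpan (m + 1) r M) (Pi.single (Fin.last m) 1)) =
      0 := by
  rw [truncQuot, QuotientAddGroup.map_mk, QuotientAddGroup.eq_zero_iff]
  convert zero_mem (colSpan m r M')
  ext k
  simp [LinearMap.funLeft_apply, (Fin.castSucc_lt_last k).ne]

theorem lastQuot_mk_single_castSucc (i : Fin m) :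
    lastQuot hzero (QuotientAddGroup.mk (s := colSpan (m + 1) r M) (Pi.single i.castSucc 1)) =
      0 := by
  simp [lastQuot, (Fin.castSucc_lt_last i).ne']

theorem lastQuot_mk_single_last :
    lastQuot hzero (QuotientAddGroup.mk (s := colSpan (m + 1) r M) (Pi.single (Fin.last m) 1)) =
      1 := by
  simp [lastQuot]

theorem snocQuot_mk_single (i : Fin m) :
    snocQuot hzero hM' (QuotientAddGroup.mk (s := colSpan m r M') (Pi.single i 1)) =
      QuotientAddGroup.mk (Pi.single i.castSucc 1) := by
  rw [snocQuot, QuotientAddGroup.map_mk, snocZeroHom_single]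

theorem truncQuot_snocQuot (x : (Fin m → ℤ) ⧸ colSpan m r M') :
    truncQuot hM' (snocQuot hzero hM' x) = x := by
  induction x using QuotientAddGroup.induction_on with
  | H v =>
    rw [snocQuot, truncQuot, QuotientAddGroup.map_mk, QuotientAddGroup.map_mk]
    congr 1
    ext k
    simp [snocZeroHom, LinearMap.funLeft_apply]

def sacgSnoc : SACG m r M' →g SACG (m + 1) r M where
  toFun := snocQuot hzero hM'
  map_rel' := by
    rintro x y ⟨hne, i, h⟩
    refine ⟨(Function.LeftInverse.injective (truncQuot_snocQuot hzero hM')).ne hne, i.castSucc, ?_⟩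
    rw [← map_sub, ← map_sub, ← snocQuot_mk_single hzero hM']
    exact h.imp (congrArg _) (congrArg _)

def sacgSplit (hloops : ∀ i : Fin m, (Pi.single i (1 : ℤ) : Fin m → ℤ) ∉ colSpan m r M') :
    SACG (m + 1) r M →g SACG m r M' □ hasse ℤ where
  toFun x := (truncQuot hM' x, lastQuot hzero x)
  map_rel' := by
    suffices key : ∀ x y i, x - y = QuotientAddGroup.mk (Pi.single i 1) →
        (SACG m r M' □ hasse ℤ).Adj (truncQuot hM' x, lastQuot hzero x)
          (truncQuot hM' y, lastQuot hzero y) by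
      rintro x y ⟨-, i, h | h⟩
      exacts [key x y i h, (key y x i h).symm]
    intro x y i h
    have htrunc := congrArg (truncQuot hM') h
    have hlast := congrArg (lastQuot hzero) h
    rw [map_sub] at htrunc hlast
    induction i using Fin.lastCases with
    | last =>
      rw [truncQuot_mk_single_last, sub_eq_zero] at htrunc
      rw [lastQuot_mk_single_last, sub_eq_iff_eq_add'] at hlast
      exact Or.inr ⟨Or.inr (Order.covBy_iff_add_one_eq.2 hlast.symm), htrunc⟩
    | cast i =>
      rw [truncQuot_mk_single_castSucc] at htrunc
      rw [lastQuot_mk_single_castSucc, sub_eq_zero] at hlast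
      exact Or.inl ⟨SACG.adj_of_sub_eq_single (hloops i) htrunc, hlast⟩

end ZeroRow

theorem stmt_4 (m r : ℕ) (hm : 1 ≤ m) (M : Matrix (Fin (m + 1)) (Fin r) ℤ)
    (M' : Matrix (Fin m) (Fin r) ℤ)
    (hzero : ∀ j : Fin r, M (Fin.last m) j = 0)
    (hM' : ∀ (i : Fin m) (j : Fin r), M' i j = M i.castSucc j)
    (hloops : ∀ i : Fin m, (Pi.single i (1 : ℤ) : Fin m → ℤ) ∉ colSpan m r M') :
    (SACG (m + 1) r M).chromaticNumber = (SACG m r M').chromaticNumber := by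
  have hedge : (SACG m r M').Adj (QuotientAddGroup.mk (Pi.single ⟨0, hm⟩ 1)) 0 :=
    SACG.adj_of_sub_eq_single (hloops ⟨0, hm⟩) (sub_zero _)
  apply le_antisymm
  · calc (SACG (m + 1) r M).chromaticNumber
        ≤ (SACG m r M' □ hasse ℤ).chromaticNumber :=
          chromaticNumber_mono_of_hom (sacgSplit hzero hM' hloops)
      _ ≤ (SACG m r M').chromaticNumber :=
          chromaticNumber_boxProd_le_of_adj hedge hasse_int_colorable_two
  · exact chromaticNumber_mono_of_hom (sacgSnoc hzero hM')
end

section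
/- Let y11, y21, y22 be integers with y11 ≥ 0 and y22 ≥ 0, let M be the 2×2 matrix with rows (y11, 0) and (y21, y22), let X = M^SACG, and let e = gcd(y11, y21, y22). Then: (1) if y22 = 1, or (y11 = 1 and y22 divides y21), or (y11 = 0 and gcd(y21, y22) = 1), then some standard basis vector of ℤ^2 lies in the subgroup generated by the columns of M (X has loops); (2) if y11 + y21 and y22 are both even, then χ(X) = 2; (3) if neither the condition of (1) nor that of (2) holds, and moreover y11 = 0 or y22 = 0 or e > 1 or y22 divides y21, then χ(X) = 3; (4) if none of the conditions in (1)–(3) hold, then there exists an integer q with gcd(y11, y21 + q·y22) = 1, and for any such q, setting a = −y21 − q·y22, b = y11, and n = y11·y22, we have χ(X) = χ(C_n(a,b)). -/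
/-- The Heuberger circulant `C_n(a,b)`: vertices are `ℤ/nℤ`, with distinct `x, y`
adjacent iff `x - y ≡ ±a` or `±b (mod n)`. -/
def HeubergerCirculant (n a b : ℤ) : SimpleGraph (ZMod n.natAbs) where
  Adj x y := x ≠ y ∧ (x - y = (a : ZMod n.natAbs) ∨ x - y = -(a : ZMod n.natAbs) ∨
    x - y = (b : ZMod n.natAbs) ∨ x - y = -(b : ZMod n.natAbs))
  symm := by
    constructor
    rintro x y ⟨hne, h⟩
    refine ⟨hne.symm, ?_⟩
    have hyx : y - x = -(x - y) := by ring
    rcases h with h | h | h | h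
    · exact Or.inr (Or.inl (by rw [hyx, h]))
    · exact Or.inl (by rw [hyx, h, neg_neg])
    · exact Or.inr (Or.inr (Or.inr (by rw [hyx, h])))
    · exact Or.inr (Or.inr (Or.inl (by rw [hyx, h, neg_neg])))
  loopless := by constructor; rintro x ⟨h, -⟩; exact h rfl

/-!
Write `H` for the column lattice of `M`. A function on `ℤ²` that is `H`-periodic and changes along
every step `eᵢ` is a proper colouring of `ℤ²/H`. The parity of `x₀ + x₁` is one with two values
when both columns have even coordinate sum; three values come from periodic colourings of
cycles, applied coordinatewise when every row of `M` has a common divisor `≠ 1`, or to a linear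
form `≡ ±1` on each `eᵢ` when `y22 = 0`. Conversely, without loops a 2-colouring `c` makes
`c + (x₀ + x₁) mod 2` invariant under every step, hence constant, so both column sums are even.
In the remaining case `x ↦ a x₀ + y11 x₁ mod y11 y22` is onto with kernel exactly `H`, which
identifies the graph with `C_n(a, b)`; a suitable `q` is the product of the primes dividing
`y11` but not `y21`.
-/

open Matrix

def periods {G α : Type*} [AddGroup G] (f : G → α) : AddSubgroup G where
  carrier := {c | Function.Periodic f c}
  zero_mem' := fun x => by rw [add_zero]
  add_mem' := Function.Periodic.add_period
  neg_mem' := Function.Periodic.neg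

theorem periods_eq_top_of_forall_single {m : ℕ} {α : Type*} {f : (Fin m → ℤ) → α}
    (hf : ∀ i, Function.Periodic f (Pi.single i 1)) : periods f = ⊤ := by
  refine eq_top_iff.mpr fun x _ => ?_
  rw [← Finset.univ_sum_single x]
  refine AddSubgroup.sum_mem _ fun i _ => ?_
  rw [← mul_one (x i), ← smul_eq_mul, Pi.single_smul']
  exact AddSubgroup.zsmul_mem _ (hf i) _

-- A proper colouring of the cycle `ℤ/n`, or of the path `ℤ` when `n = 0` (as `x % 0 = x`):
-- residues alternate between `0` and `1`, and `n - 1` gets colour `2` to close an odd cycle.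
def cycleColor (n : ℕ) (x : ℤ) : ZMod 3 :=
  if x % n = n - 1 then 2 else if Even (x % n) then 0 else 1

theorem cycleColor_congr {n : ℕ} {x y : ℤ} (h : x ≡ y [ZMOD n]) :
    cycleColor n x = cycleColor n y := by
  unfold cycleColor
  rw [h]

theorem cycleColor_add_one_ne {n : ℕ} (hn : n ≠ 1) (x : ℤ) :
    cycleColor n (x + 1) ≠ cycleColor n x := by
  have hsucc : (x + 1) % n = if x % n = n - 1 then 0 else x % n + 1 := by
    rcases Nat.eq_zero_or_pos n with rfl | hpos
    · simp only [CharP.cast_eq_zero, Int.emod_zero]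
      split_ifs <;> omega
    · have h0 := Int.emod_nonneg x (by omega : (n : ℤ) ≠ 0)
      have h1 := Int.emod_lt_of_pos x (by omega : (0 : ℤ) < n)
      rw [Int.add_emod, Int.emod_eq_of_lt (by omega : (0 : ℤ) ≤ 1) (by omega : (1 : ℤ) < n)]
      split_ifs with h
      · rw [h, sub_add_cancel, Int.emod_self]
      · exact Int.emod_eq_of_lt (by omega) (by omega)
  unfold cycleColor
  rw [hsucc]
  generalize x % n = r
  split_ifs <;> first | decide | omega | (rw [Int.even_add_one] at *; tauto)

section

variable {m r : ℕ} {M : Matrix (Fin m) (Fin r) ℤ}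

theorem mem_colSpan_iff {x : Fin m → ℤ} : x ∈ colSpan m r M ↔ ∃ c, M *ᵥ c = x := by
  change x ∈ (colSpan m r M).toIntSubmodule ↔ x ∈ LinearMap.range M.mulVecLin
  rw [Matrix.range_mulVecLin, colSpan, AddSubgroup.toIntSubmodule_closure]
  rfl

theorem colSpan_le_periods {α : Type*} {f : (Fin m → ℤ) → α}
    (hf : ∀ j, Function.Periodic f fun i => M i j) : colSpan m r M ≤ periods f :=
  (AddSubgroup.closure_le _).mpr (Set.range_subset_iff.mpr hf)

theorem SACG.adj_mk_add_single {i : Fin m} (hi : Pi.single i 1 ∉ colSpan m r M)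
    (x : Fin m → ℤ) :
    (SACG m r M).Adj (QuotientAddGroup.mk (x + Pi.single i 1)) (QuotientAddGroup.mk x) := by
  refine ⟨fun h => hi ?_, i, Or.inl ?_⟩
  · simpa using QuotientAddGroup.eq.mp h.symm
  · rw [← QuotientAddGroup.mk_sub, add_sub_cancel_left]

theorem SACG.colorable_of_periodic {α : Type*} [Fintype α] (f : (Fin m → ℤ) → α)
    (hf : ∀ j, Function.Periodic f fun i => M i j)
    (hstep : ∀ x i, f (x + Pi.single i 1) ≠ f x) :
    (SACG m r M).Colorable (Fintype.card α) := by
  have hper := colSpan_le_periods hf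
  let c : (Fin m → ℤ) ⧸ colSpan m r M → α := Quotient.lift f fun x y hxy => by
    have := hper (QuotientAddGroup.leftRel_apply.mp hxy) x
    rwa [add_neg_cancel_left, eq_comm] at this
  refine (SimpleGraph.Coloring.mk c ?_).colorable
  intro u v huv
  induction u using QuotientAddGroup.induction_on with | H x => ?_
  induction v using QuotientAddGroup.induction_on with | H y => ?_
  obtain ⟨-, i, h | h⟩ := huv <;>
    rw [← QuotientAddGroup.mk_sub, QuotientAddGroup.eq] at h <;> have := hper h
  · have hx : f (y + Pi.single i 1) = f x := by rw [← this x]; abel_nf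
    exact fun hxy => hstep y i (hx.trans hxy)
  · have hy : f (x + Pi.single i 1) = f y := by rw [← this y]; abel_nf
    exact fun hxy => hstep x i (hy.trans hxy.symm)

theorem sum_add_single_one (x : Fin m → ℤ) (i : Fin m) :
    ∑ k, (x + Pi.single i 1 : Fin m → ℤ) k = ∑ k, x k + 1 := by
  simp [Finset.sum_add_distrib]

theorem periodic_intCast_sum {v : Fin m → ℤ} (hv : Even (∑ i, v i)) :
    Function.Periodic (fun x : Fin m → ℤ => ((∑ i, x i : ℤ) : ZMod 2)) v := fun x => by
  simp [Finset.sum_add_distrib, (ZMod.intCast_eq_zero_iff_even).mpr hv]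

theorem SACG.colorable_two_of_even (h : ∀ j, Even (∑ i, M i j)) :
    (SACG m r M).Colorable 2 := by
  simpa using SACG.colorable_of_periodic _ (fun j => periodic_intCast_sum (h j)) fun x i => by
    rw [sum_add_single_one, Int.cast_add, Int.cast_one]; simp

theorem SACG.chromaticNumber_eq_two_of_even [NeZero m] (h : ∀ j, Even (∑ i, M i j)) :
    (SACG m r M).chromaticNumber = 2 := by
  have hE : Pi.single 0 1 ∉ colSpan m r M := fun hmem => by
    simpa using colSpan_le_periods (fun j => periodic_intCast_sum (h j)) hmem 0
  exact le_antisymm (SACG.colorable_two_of_even h).chromaticNumber_le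
    (SimpleGraph.two_le_chromaticNumber_of_adj (SACG.adj_mk_add_single hE 0))

theorem SACG.even_sum_of_colorable_two (hE : ∀ i, Pi.single i 1 ∉ colSpan m r M)
    (hc : (SACG m r M).Colorable 2) (j : Fin r) : Even (∑ i, M i j) := by
  obtain ⟨C⟩ : Nonempty ((SACG m r M).Coloring (ZMod 2)) := hc
  let g : (Fin m → ℤ) → ZMod 2 := fun x =>
    C (QuotientAddGroup.mk x) + ((∑ i, x i : ℤ) : ZMod 2)
  have hg : ∀ i, Function.Periodic g (Pi.single i 1) := fun i x => by
    have hne := C.valid (SACG.adj_mk_add_single (hE i) x)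
    have eq_add_one_of_ne : ∀ a b : ZMod 2, a ≠ b → a = b + 1 := by decide
    simp only [g, eq_add_one_of_ne _ _ hne, sum_add_single_one]
    push_cast
    rw [add_add_add_comm, (by decide : (1 : ZMod 2) + 1 = 0), add_zero]
  have hcol : QuotientAddGroup.mk (fun i => M i j) = (0 : (Fin m → ℤ) ⧸ colSpan m r M) :=
    (QuotientAddGroup.eq_zero_iff _).mpr (AddSubgroup.subset_closure ⟨j, rfl⟩)
  have := ((periods_eq_top_of_forall_single hg).symm ▸ AddSubgroup.mem_top _ :
    (fun i => M i j) ∈ periods g) 0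
  rw [← ZMod.intCast_eq_zero_iff_even]
  simpa [g, hcol] using this

theorem SACG.colorable_three_of_dvd (n : Fin m → ℕ) (hn : ∀ i, n i ≠ 1)
    (hM : ∀ i j, (n i : ℤ) ∣ M i j) : (SACG m r M).Colorable 3 := by
  simpa using SACG.colorable_of_periodic (fun x => ∑ i, cycleColor (n i) (x i))
    (fun j x => Finset.sum_congr rfl fun i _ => cycleColor_congr <| by
      simpa using (Int.modEq_zero_iff_dvd.mpr (hM i j)).add_left (x i))
    fun x i => by
      have hrest : ∑ k ∈ {i}ᶜ, cycleColor (n k) ((x + Pi.single i 1 : Fin m → ℤ) k) =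
          ∑ k ∈ {i}ᶜ, cycleColor (n k) (x k) :=
        Finset.sum_congr rfl fun k hk => by
          rw [Pi.add_apply, Pi.single_eq_of_ne (by simpa using hk), add_zero]
      rw [Fintype.sum_eq_add_sum_compl i, Fintype.sum_eq_add_sum_compl i, hrest, Ne, add_left_inj]
      simpa using cycleColor_add_one_ne (hn i) (x i)

theorem SACG.colorable_three_of_vecMul (n : ℕ) (hn : n ≠ 1) (w : Fin m → ℤ)
    (hw : ∀ i, w i ≡ 1 [ZMOD n] ∨ w i ≡ -1 [ZMOD n])
    (hwM : ∀ j, (n : ℤ) ∣ (w ᵥ* M) j) :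
    (SACG m r M).Colorable 3 := by
  simpa using SACG.colorable_of_periodic (fun x => cycleColor n (w ⬝ᵥ x))
    (fun j x => cycleColor_congr <| by
      simpa [dotProduct_add, vecMul] using
        (Int.modEq_zero_iff_dvd.mpr (hwM j)).add_left (w ⬝ᵥ x))
    fun x i => by
      rcases hw i with h | h
      · rw [dotProduct_add, dotProduct_single, mul_one, cycleColor_congr (h.add_left _)]
        exact cycleColor_add_one_ne hn _
      · rw [dotProduct_add, dotProduct_single, mul_one, cycleColor_congr (h.add_left _),
          ← sub_eq_add_neg]
        simpa using (cycleColor_add_one_ne hn (w ⬝ᵥ x - 1)).symm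

def SACG.isoOfAddEquiv {G : Type*} [AddGroup G] {Γ : SimpleGraph G}
    (E : (Fin m → ℤ) ⧸ colSpan m r M ≃+ G)
    (hΓ : ∀ x y, Γ.Adj x y ↔ x ≠ y ∧ ∃ i,
      x - y = E (QuotientAddGroup.mk (Pi.single i 1)) ∨
        y - x = E (QuotientAddGroup.mk (Pi.single i 1))) :
    SACG m r M ≃g Γ where
  toEquiv := E.toEquiv
  map_rel_iff' {u v} := by
    simp [hΓ, SACG, ← map_sub, E.injective.eq_iff]

def castDotProduct (N : ℕ) (w : Fin m → ℤ) : (Fin m → ℤ) →+ ZMod N :=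
  AddMonoidHom.mk' (fun x => ((w ⬝ᵥ x : ℤ) : ZMod N)) fun x y => by simp [dotProduct_add]

theorem castDotProduct_apply (N : ℕ) (w x : Fin m → ℤ) :
    castDotProduct N w x = ((w ⬝ᵥ x : ℤ) : ZMod N) := rfl

theorem castDotProduct_surjective {N : ℕ} {w c : Fin m → ℤ} (hc : w ⬝ᵥ c = 1) :
    Function.Surjective (castDotProduct N w) := fun z => by
  obtain ⟨k, rfl⟩ := ZMod.intCast_surjective z
  exact ⟨k • c, by
    rw [castDotProduct_apply, dotProduct_smul, hc, smul_eq_mul, mul_one]⟩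

end

theorem HeubergerCirculant.adj_iff {n a b : ℤ} {x y : ZMod n.natAbs} :
    (HeubergerCirculant n a b).Adj x y ↔
      x ≠ y ∧ ((x - y = a ∨ y - x = a) ∨ (x - y = b ∨ y - x = b)) := by
  simp only [HeubergerCirculant, ← neg_sub y x, neg_inj, or_assoc]

theorem exists_gcd_add_mul_eq_one {a b c : ℤ} (ha : a ≠ 0) (h : Int.gcd a (Int.gcd b c) = 1) :
    ∃ q : ℤ, Int.gcd a (b + q * c) = 1 := by
  classical
  let S : Finset ℕ := {p ∈ a.natAbs.primeFactors | ¬(p : ℤ) ∣ b}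
  refine ⟨∏ p ∈ S, (p : ℤ), Nat.coprime_of_dvd fun p hp hpa hpbc => ?_⟩
  rw [← Int.natCast_dvd] at hpa hpbc
  have hpZ : Prime (p : ℤ) := Nat.prime_iff_prime_int.mp hp
  by_cases hpb : (p : ℤ) ∣ b
  · have hpc : (p : ℤ) ∣ c := by
      refine (hpZ.dvd_or_dvd ((dvd_add_right hpb).mp hpbc)).resolve_left fun hpQ => ?_
      obtain ⟨p', hp'S, hpp'⟩ := hpZ.exists_mem_finset_dvd hpQ
      have hp' := Finset.mem_filter.mp hp'S
      rw [Int.natCast_dvd_natCast, Nat.prime_dvd_prime_iff_eq hp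
        (Nat.prime_of_mem_primeFactors hp'.1)] at hpp'
      exact hp'.2 (hpp' ▸ hpb)
    have := Int.dvd_gcd hpa (Int.dvd_coe_gcd hpb hpc)
    exact hp.ne_one (Nat.dvd_one.mp (h ▸ this))
  · have hpS : p ∈ S := Finset.mem_filter.mpr
      ⟨Nat.mem_primeFactors.mpr ⟨hp, Int.natCast_dvd.mp hpa, by simpa using ha⟩, hpb⟩
    exact hpb ((dvd_add_left ((Finset.dvd_prod_of_mem _ hpS).mul_right c)).mp hpbc)

section

variable {y11 y21 y22 : ℤ}

theorem mem_colSpan_lowerTriangular {x : Fin 2 → ℤ} :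
    x ∈ colSpan 2 2 !![y11, 0; y21, y22] ↔
      ∃ s t : ℤ, x 0 = s * y11 ∧ x 1 = s * y21 + t * y22 := by
  rw [mem_colSpan_iff]
  constructor
  · rintro ⟨c, rfl⟩
    refine ⟨c 0, c 1, ?_, ?_⟩ <;> simp [mulVec, dotProduct, mul_comm]
  · rintro ⟨s, t, h0, h1⟩
    refine ⟨![s, t], funext fun i => ?_⟩
    fin_cases i <;> simp [h0, h1, mul_comm]

theorem single_zero_mem_colSpan_iff :
    Pi.single 0 1 ∈ colSpan 2 2 !![y11, 0; y21, y22] ↔ IsUnit y11 ∧ y22 ∣ y21 := by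
  simp only [mem_colSpan_lowerTriangular, Pi.single_eq_same,
    Pi.single_eq_of_ne (show (1 : Fin 2) ≠ 0 by decide)]
  constructor
  · rintro ⟨s, t, h0, h1⟩
    have hs : IsUnit s := IsUnit.of_mul_eq_one _ h0.symm
    exact ⟨IsUnit.of_mul_eq_one_right _ h0.symm,
      (hs.dvd_mul_left).mp ⟨-t, by linear_combination -h1⟩⟩
  · rintro ⟨hu, k, rfl⟩
    exact ⟨y11, -(y11 * k), (Int.isUnit_mul_self hu).symm, by ring⟩

theorem single_one_mem_colSpan_iff :
    Pi.single 1 1 ∈ colSpan 2 2 !![y11, 0; y21, y22] ↔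
      IsUnit y22 ∨ (y11 = 0 ∧ IsCoprime y21 y22) := by
  simp only [mem_colSpan_lowerTriangular, Pi.single_eq_same,
    Pi.single_eq_of_ne (show (0 : Fin 2) ≠ 1 by decide)]
  constructor
  · rintro ⟨s, t, h0, h1⟩
    by_cases hy11 : y11 = 0
    · exact Or.inr ⟨hy11, s, t, h1.symm⟩
    · obtain rfl : s = 0 := by simpa [hy11] using h0
      exact Or.inl (IsUnit.of_mul_eq_one_right _ (by simpa using h1.symm))
  · rintro (hu | ⟨rfl, u, v, huv⟩)
    · obtain ⟨t, ht⟩ := hu.exists_left_inv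
      exact ⟨0, t, by simp, by simp [ht]⟩
    · exact ⟨u, v, by simp, huv.symm⟩

theorem exists_single_mem_colSpan_iff (h11 : 0 ≤ y11) (h22 : 0 ≤ y22) :
    (∃ i : Fin 2, Pi.single i 1 ∈ colSpan 2 2 !![y11, 0; y21, y22]) ↔
      y22 = 1 ∨ (y11 = 1 ∧ y22 ∣ y21) ∨ (y11 = 0 ∧ Int.gcd y21 y22 = 1) := by
  rw [Fin.exists_fin_two, single_zero_mem_colSpan_iff, single_one_mem_colSpan_iff,
    Int.isUnit_iff, Int.isUnit_iff, Int.isCoprime_iff_gcd_eq_one]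
  simp only [show y11 ≠ -1 by omega, show y22 ≠ -1 by omega, or_false]
  tauto

theorem SACG.colorable_three_of_isCoprime (h11 : y11 ≠ 0) (h21 : y21 ≠ 0)
    (hco : IsCoprime y11 y21) : (SACG 2 2 !![y11, 0; y21, 0]).Colorable 3 := by
  obtain ⟨ε, hε, hn⟩ :
      ∃ ε : ℤ, (ε = 1 ∨ ε = -1) ∧ (y11 + ε * y21).natAbs ≠ 1 := by
    by_cases h : (y11 + y21).natAbs = 1
    · exact ⟨-1, Or.inr rfl, by omega⟩
    · exact ⟨1, Or.inl rfl, by simpa using h⟩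
  obtain ⟨u, v, huv⟩ := hco.symm.add_mul_right_right ε
  -- modulo `y11 + ε * y21`, the vector below is congruent to `(1, ε)`
  refine SACG.colorable_three_of_vecMul _ hn ![u * y21, -(u * y11)] ?_ ?_
  · simp only [Fin.forall_fin_two, Int.natCast_natAbs, Int.modEq_iff_dvd, abs_dvd]
    rcases hε with rfl | rfl
    · exact ⟨Or.inl ⟨v, by simp; linear_combination -huv⟩,
        Or.inl ⟨u + v, by simp; linear_combination -huv⟩⟩
    · exact ⟨Or.inl ⟨v, by simp; linear_combination -huv⟩,
        Or.inr ⟨u - v, by simp; linear_combination huv⟩⟩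
  · simp [Fin.forall_fin_two, vecMul, dotProduct, Fin.sum_univ_two, mul_right_comm]

theorem SACG.colorable_three_lowerTriangular
    (h0 : Pi.single 0 1 ∉ colSpan 2 2 !![y11, 0; y21, y22])
    (h1 : Pi.single 1 1 ∉ colSpan 2 2 !![y11, 0; y21, y22])
    (h : y11 = 0 ∨ y22 = 0 ∨ 1 < Int.gcd y11 (Int.gcd y21 y22) ∨ y22 ∣ y21) :
    (SACG 2 2 !![y11, 0; y21, y22]).Colorable 3 := by
  rw [single_zero_mem_colSpan_iff, Int.isUnit_iff_natAbs_eq] at h0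
  rw [single_one_mem_colSpan_iff, Int.isUnit_iff_natAbs_eq, Int.isCoprime_iff_gcd_eq_one,
    not_or] at h1
  by_cases hdvd : y22 ∣ y21
  · refine SACG.colorable_three_of_dvd ![y11.natAbs, y22.natAbs] ?_ ?_
    · simpa [Fin.forall_fin_two] using ⟨fun h => h0 ⟨h, hdvd⟩, h1.1⟩
    · simp [Fin.forall_fin_two, hdvd]
  by_cases hy11 : y11 = 0
  · subst hy11
    refine SACG.colorable_three_of_dvd ![0, Int.gcd y21 y22] ?_ ?_
    · simpa [Fin.forall_fin_two] using h1.2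
    · simp [Fin.forall_fin_two, Int.gcd_dvd_left, Int.gcd_dvd_right]
  by_cases he : 1 < Int.gcd y11 (Int.gcd y21 y22)
  · refine SACG.colorable_three_of_dvd (fun _ => Int.gcd y11 (Int.gcd y21 y22))
      (fun _ => he.ne') ?_
    have hg := Int.gcd_dvd_right y11 (Int.gcd y21 y22)
    simp [Fin.forall_fin_two, Int.gcd_dvd_left, hg.trans (Int.gcd_dvd_left _ _),
      hg.trans (Int.gcd_dvd_right _ _)]
  obtain rfl : y22 = 0 := by tauto
  have hgcd : Int.gcd y11 y21 ≠ 0 := fun h => hy11 (Int.gcd_eq_zero_iff.mp h).1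
  refine SACG.colorable_three_of_isCoprime hy11 (by simpa using hdvd)
    (Int.isCoprime_iff_gcd_eq_one.mpr ?_)
  simp only [Int.gcd_zero_right, not_lt] at he
  simp only [Int.gcd, Int.natAbs_natCast] at he hgcd ⊢
  omega

end

section

variable {y11 y21 y22 a : ℤ}

theorem ker_castDotProduct_eq_colSpan (hy11 : y11 ≠ 0) (ha : IsCoprime a y11)
    (hay : y22 ∣ a + y21) :
    (castDotProduct (y11 * y22).natAbs ![a, y11]).ker = colSpan 2 2 !![y11, 0; y21, y22] := by
  obtain ⟨k, hk⟩ := hay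
  ext x
  rw [AddMonoidHom.mem_ker, castDotProduct_apply, ZMod.intCast_zmod_eq_zero_iff_dvd,
    Int.natCast_natAbs, abs_dvd, mem_colSpan_lowerTriangular]
  simp only [dotProduct, Fin.sum_univ_two, Matrix.cons_val_zero, Matrix.cons_val_one]
  constructor
  · intro hdvd
    obtain ⟨s, hs⟩ : y11 ∣ x 0 := ha.symm.dvd_of_dvd_mul_left <|
      (dvd_add_left (dvd_mul_right _ _)).mp ((dvd_mul_right y11 y22).trans hdvd)
    obtain ⟨t, ht⟩ : y22 ∣ a * s + x 1 :=
      (mul_dvd_mul_iff_left hy11).mp (by rwa [mul_add, mul_left_comm, ← hs])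
    exact ⟨s, t - k * s, by rw [hs, mul_comm], by linear_combination ht - s * hk⟩
  · rintro ⟨s, t, h0, h1⟩
    exact ⟨s * k + t, by rw [h0, h1]; linear_combination y11 * s * hk⟩

noncomputable def heubergerIso (hy11 : y11 ≠ 0) (ha : IsCoprime a y11) (hay : y22 ∣ a + y21) :
    SACG 2 2 !![y11, 0; y21, y22] ≃g HeubergerCirculant (y11 * y22) a y11 :=
  let φ := castDotProduct (y11 * y22).natAbs ![a, y11]
  have hsurj : Function.Surjective φ := by
    obtain ⟨u, v, huv⟩ := ha
    exact castDotProduct_surjective (c := ![u, v]) (by simp [dotProduct, ← huv, mul_comm])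
  let E := (QuotientAddGroup.quotientAddEquivOfEq
    (ker_castDotProduct_eq_colSpan hy11 ha hay).symm).trans
    (QuotientAddGroup.quotientKerEquivOfSurjective φ hsurj)
  SACG.isoOfAddEquiv E fun x y => by
    have hE : ∀ v, E (QuotientAddGroup.mk v) = φ v := fun _ => rfl
    simp [HeubergerCirculant.adj_iff, Fin.exists_fin_two, hE, φ, castDotProduct_apply]

end

theorem stmt_9 (y11 y21 y22 : ℤ) (h11 : 0 ≤ y11) (h22 : 0 ≤ y22)
    (M : Matrix (Fin 2) (Fin 2) ℤ) (hM : M = !![y11, 0; y21, y22])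
    (e : ℕ) (he : e = Int.gcd y11 (Int.gcd y21 y22)) :
    ((y22 = 1 ∨ (y11 = 1 ∧ y22 ∣ y21) ∨ (y11 = 0 ∧ Int.gcd y21 y22 = 1)) →
      ∃ i : Fin 2, (Pi.single i (1 : ℤ) : Fin 2 → ℤ) ∈ colSpan 2 2 M) ∧
    ((Even (y11 + y21) ∧ Even y22) → (SACG 2 2 M).chromaticNumber = 2) ∧
    (¬ (y22 = 1 ∨ (y11 = 1 ∧ y22 ∣ y21) ∨ (y11 = 0 ∧ Int.gcd y21 y22 = 1)) →
      ¬ (Even (y11 + y21) ∧ Even y22) →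
      (y11 = 0 ∨ y22 = 0 ∨ 1 < e ∨ y22 ∣ y21) →
      (SACG 2 2 M).chromaticNumber = 3) ∧
    (¬ (y22 = 1 ∨ (y11 = 1 ∧ y22 ∣ y21) ∨ (y11 = 0 ∧ Int.gcd y21 y22 = 1)) →
      ¬ (Even (y11 + y21) ∧ Even y22) →
      ¬ (y11 = 0 ∨ y22 = 0 ∨ 1 < e ∨ y22 ∣ y21) →
      (∃ q : ℤ, Int.gcd y11 (y21 + q * y22) = 1) ∧
      ∀ q : ℤ, Int.gcd y11 (y21 + q * y22) = 1 →
        (SACG 2 2 M).chromaticNumber =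
          (HeubergerCirculant (y11 * y22) (-y21 - q * y22) y11).chromaticNumber) := by
  subst hM he
  have hloops := exists_single_mem_colSpan_iff (y21 := y21) h11 h22
  refine ⟨hloops.mpr, fun ⟨hev1, hev2⟩ => ?_, fun hc1 hc2 hc3 => ?_, fun _ _ hc3 => ?_⟩
  · exact SACG.chromaticNumber_eq_two_of_even
      (by simpa [Fin.forall_fin_two] using ⟨hev1, hev2⟩)
  · have hE : ∀ i, Pi.single i 1 ∉ colSpan 2 2 !![y11, 0; y21, y22] :=
      fun i hi => hc1 (hloops.mp ⟨i, hi⟩)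
    have hnot2 : ¬(SACG 2 2 !![y11, 0; y21, y22]).Colorable 2 := fun h2 => hc2 <| by
      have hcol := SACG.even_sum_of_colorable_two hE h2
      simpa [Fin.sum_univ_two] using And.intro (hcol 0) (hcol 1)
    exact SimpleGraph.chromaticNumber_eq_iff_colorable_not_colorable.mpr
      ⟨SACG.colorable_three_lowerTriangular (hE 0) (hE 1) hc3, hnot2⟩
  · simp only [not_or, not_lt] at hc3
    obtain ⟨hy11, -, he, -⟩ := hc3
    have hgcd : Int.gcd y11 (Int.gcd y21 y22) = 1 :=
      le_antisymm he (Nat.pos_of_ne_zero fun h => hy11 (Int.gcd_eq_zero_iff.mp h).1)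
    refine ⟨exists_gcd_add_mul_eq_one hy11 hgcd, fun q hq => ?_⟩
    refine SimpleGraph.chromaticNumber_congr (heubergerIso hy11 ?_ ⟨-q, by ring⟩)
    rw [← neg_add']
    exact (Int.isCoprime_iff_gcd_eq_one.mpr hq).symm.neg_left
end
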